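/- arXiv:2106.11078 — 3 statements merged into one kernel-verified Lean document; each statement's English description precedes it below -/
import Mathlib

section
/- Let 𝔤 be a Lie algebra over a field k equipped with a symmetric invariant bilinear form B (i.e. B([x,y],z) + B(y,[x,z]) = 0) on 𝔤, transferred via B to an element of S²(𝔤) viewed as a map B♯ : 𝔤* → 𝔤. Then B♯ : 𝔤* → 𝔤, where 𝔤* carries the bracket [α,β] := ad*_{B♯α} β and 𝔤 acts on 𝔤* by the negative coadjoint action x·α = −ad*_x α, is a crossed module of Lie algebras. -/
/-!
Symmetry and invariance of the form say exactly that B♯ intertwines the coadjoint action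
with the adjoint one, `B♯(x·α) = [x, B♯α]`, and the bracket on `𝔤*` is by definition
`[α,β] = (B♯α)·β`.
Every axiom of a crossed module then follows from the fact that the coadjoint action is a
Lie algebra action, together with this equivariance.
-/

section Coadjoint

variable {R L : Type*} [CommRing R] [LieRing L] [LieAlgebra R L]

theorem coadjoint_lie_apply {act : L → Module.Dual R L → Module.Dual R L}
    (hact : ∀ x α y, act x α y = -α ⁅x, y⁆) (x y : L) (α : Module.Dual R L) :
    act ⁅x, y⁆ α = act x (act y α) - act y (act x α) := by
  ext z
  simp only [LinearMap.sub_apply, hact, neg_neg, lie_lie, map_sub]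
  abel

variable {Bs : Module.Dual R L →ₗ[R] L}

theorem sharp_coadjoint [Module.Projective R L]
    (hsym : ∀ α β : Module.Dual R L, β (Bs α) = α (Bs β))
    (hinv : ∀ (x : L) (α β : Module.Dual R L), α ⁅x, Bs β⁆ + β ⁅x, Bs α⁆ = 0)
    {act : L → Module.Dual R L → Module.Dual R L} (hact : ∀ x α y, act x α y = -α ⁅x, y⁆)
    (x : L) (α : Module.Dual R L) : Bs (act x α) = ⁅x, Bs α⁆ := by
  refine Module.eval_apply_injective R (LinearMap.ext fun φ => ?_)
  simp only [Module.Dual.eval_apply]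
  rw [hsym, hact]
  linear_combination -hinv x α φ

theorem sharp_bracket_antisymm
    (hinv : ∀ (x : L) (α β : Module.Dual R L), α ⁅x, Bs β⁆ + β ⁅x, Bs α⁆ = 0)
    {br : Module.Dual R L → Module.Dual R L → Module.Dual R L}
    (hbr : ∀ α β y, br α β y = -β ⁅Bs α, y⁆) (α β : Module.Dual R L) :
    br α β = -br β α := by
  ext y
  have h := hinv y α β
  rw [← lie_skew y (Bs β), ← lie_skew y (Bs α), map_neg, map_neg] at h
  rw [LinearMap.neg_apply, hbr, hbr]
  linear_combination h

end Coadjoint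

theorem stmt_7_general {k 𝔤 : Type*} [Field k] [LieRing 𝔤] [LieAlgebra k 𝔤]
    (Bs : Module.Dual k 𝔤 →ₗ[k] 𝔤)
    -- symmetry of the bilinear form transferred to B♯
    (hsym : ∀ α β : Module.Dual k 𝔤, β (Bs α) = α (Bs β))
    -- ad-invariance transferred to B♯
    (hinv : ∀ (x : 𝔤) (α β : Module.Dual k 𝔤), α ⁅x, Bs β⁆ + β ⁅x, Bs α⁆ = 0)
    -- the coadjoint action of 𝔤 on 𝔤*: (x·α)(y) = −α([x,y])
    (act : 𝔤 →ₗ[k] Module.Dual k 𝔤 →ₗ[k] Module.Dual k 𝔤)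
    (hact : ∀ (x : 𝔤) (α : Module.Dual k 𝔤) (y : 𝔤), act x α y = -α ⁅x, y⁆)
    -- the bracket on 𝔤*: [α,β] = ad*_{B♯α} β, i.e. [α,β](y) = −β([B♯α, y])
    (br : Module.Dual k 𝔤 →ₗ[k] Module.Dual k 𝔤 →ₗ[k] Module.Dual k 𝔤)
    (hbr : ∀ (α β : Module.Dual k 𝔤) (y : 𝔤), br α β y = -β ⁅Bs α, y⁆) :
    -- the bracket on 𝔤* is antisymmetric
    (∀ α β : Module.Dual k 𝔤, br α β = -br β α) ∧
    -- the bracket on 𝔤* satisfies the Jacobi (Leibniz) identity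
    (∀ α β γ : Module.Dual k 𝔤, br α (br β γ) = br (br α β) γ + br β (br α γ)) ∧
    -- B♯ is a morphism of Lie algebras
    (∀ α β : Module.Dual k 𝔤, Bs (br α β) = ⁅Bs α, Bs β⁆) ∧
    -- the action is a Lie algebra action
    (∀ (x y : 𝔤) (α : Module.Dual k 𝔤),
      act ⁅x, y⁆ α = act x (act y α) - act y (act x α)) ∧
    -- the action is by derivations of the bracket on 𝔤*
    (∀ (x : 𝔤) (α β : Module.Dual k 𝔤),
      act x (br α β) = br (act x α) β + br α (act x β)) ∧
    -- equivariance: B♯(x·α) = [x, B♯α]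
    (∀ (x : 𝔤) (α : Module.Dual k 𝔤), Bs (act x α) = ⁅x, Bs α⁆) ∧
    -- Peiffer identity: (B♯α)·β = [α,β]
    (∀ α β : Module.Dual k 𝔤, act (Bs α) β = br α β) := by
  have hlie := coadjoint_lie_apply (act := fun x α => act x α) hact
  have hequiv := sharp_coadjoint hsym hinv (act := fun x α => act x α) hact
  have hpeiffer : ∀ α β, act (Bs α) β = br α β := fun α β =>
    LinearMap.ext fun y => by rw [hact, hbr]
  have hmor : ∀ α β, Bs (br α β) = ⁅Bs α, Bs β⁆ := fun α β => by
    rw [← hpeiffer]; exact hequiv _ _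
  refine ⟨sharp_bracket_antisymm hinv (br := fun α β => br α β) hbr, fun α β γ => ?_, hmor,
    hlie, fun x α β => ?_, hequiv, hpeiffer⟩
  · simp only [← hpeiffer, hequiv, hlie]
    abel
  · simp only [← hpeiffer, hequiv, hlie]
    abel

/-- Let 𝔤 be a finite-dimensional Lie algebra with an invariant symmetric bilinear
form, transferred to a map B♯ : 𝔤* → 𝔤 (so that ⟨β, B♯α⟩ is symmetric in α, β and
invariant). Then B♯ : 𝔤* → 𝔤, with the bracket [α,β] = ad*_{B♯α} β on 𝔤* and the
(negative) coadjoint action x·α = −ad*_x α of 𝔤 on 𝔤*, is a crossed module of Lie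
algebras: the bracket on 𝔤* is a Lie bracket, B♯ is a morphism of brackets, the
action is a Lie algebra action by derivations, and the crossed module axioms
B♯(x·α) = [x, B♯α] and (B♯α)·β = [α,β] hold. -/
theorem stmt_7 {k 𝔤 : Type*} [Field k] [LieRing 𝔤] [LieAlgebra k 𝔤]
    [FiniteDimensional k 𝔤]
    (Bs : Module.Dual k 𝔤 →ₗ[k] 𝔤)
    -- symmetry of the bilinear form transferred to B♯
    (hsym : ∀ α β : Module.Dual k 𝔤, β (Bs α) = α (Bs β))
    -- ad-invariance transferred to B♯
    (hinv : ∀ (x : 𝔤) (α β : Module.Dual k 𝔤), α ⁅x, Bs β⁆ + β ⁅x, Bs α⁆ = 0)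
    -- the coadjoint action of 𝔤 on 𝔤*: (x·α)(y) = −α([x,y])
    (act : 𝔤 →ₗ[k] Module.Dual k 𝔤 →ₗ[k] Module.Dual k 𝔤)
    (hact : ∀ (x : 𝔤) (α : Module.Dual k 𝔤) (y : 𝔤), act x α y = -α ⁅x, y⁆)
    -- the bracket on 𝔤*: [α,β] = ad*_{B♯α} β, i.e. [α,β](y) = −β([B♯α, y])
    (br : Module.Dual k 𝔤 →ₗ[k] Module.Dual k 𝔤 →ₗ[k] Module.Dual k 𝔤)
    (hbr : ∀ (α β : Module.Dual k 𝔤) (y : 𝔤), br α β y = -β ⁅Bs α, y⁆) :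
    -- the bracket on 𝔤* is antisymmetric
    (∀ α β : Module.Dual k 𝔤, br α β = -br β α) ∧
    -- the bracket on 𝔤* satisfies the Jacobi (Leibniz) identity
    (∀ α β γ : Module.Dual k 𝔤, br α (br β γ) = br (br α β) γ + br β (br α γ)) ∧
    -- B♯ is a morphism of Lie algebras
    (∀ α β : Module.Dual k 𝔤, Bs (br α β) = ⁅Bs α, Bs β⁆) ∧
    -- the action is a Lie algebra action
    (∀ (x y : 𝔤) (α : Module.Dual k 𝔤),
      act ⁅x, y⁆ α = act x (act y α) - act y (act x α)) ∧
    -- the action is by derivations of the bracket on 𝔤*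
    (∀ (x : 𝔤) (α β : Module.Dual k 𝔤),
      act x (br α β) = br (act x α) β + br α (act x β)) ∧
    -- equivariance: B♯(x·α) = [x, B♯α]
    (∀ (x : 𝔤) (α : Module.Dual k 𝔤), Bs (act x α) = ⁅x, Bs α⁆) ∧
    -- Peiffer identity: (B♯α)·β = [α,β]
    (∀ α β : Module.Dual k 𝔤, act (Bs α) β = br α β) :=
  stmt_7_general Bs hsym hinv act hact br hbr
end

section
/- Let 𝔤 be a finite-dimensional Lie algebra over a field k with an ad-invariant nondegenerate symmetric bilinear form B. On the semidirect product Lie algebra 𝔊 = 𝔤* ⋊ 𝔤 (with 𝔤 acting by the negative coadjoint action and 𝔤* given the bracket induced by B♯), define the bilinear form B̄(α + X, β + Y) = ⟨α, Y⟩ + ⟨β, X⟩ + B(α, β), where B(α, β) denotes the form on 𝔤* induced by B. Then B̄ is a nondegenerate symmetric bilinear form on 𝔊 which is invariant under the adjoint action of 𝔊. -/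
/-- Let 𝔤 be a finite-dimensional Lie algebra with an ad-invariant nondegenerate
symmetric bilinear form B, and B♯ : 𝔤* → 𝔤 the induced isomorphism. On the
semidirect product Lie algebra 𝔊 = 𝔤* ⋊ 𝔤 (with bracket
[(α,X),(β,Y)] = ([α,β]_{𝔤*} − ad*_X β + ad*_Y α, [X,Y])), the bilinear form
B̄(α + X, β + Y) = ⟨α, Y⟩ + ⟨β, X⟩ + B*(α, β) is a nondegenerate symmetric
bilinear form which is invariant under the adjoint action of 𝔊. -/
theorem stmt_8 {k 𝔤 : Type*} [Field k] [LieRing 𝔤] [LieAlgebra k 𝔤]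
    [FiniteDimensional k 𝔤]
    (B : 𝔤 →ₗ[k] 𝔤 →ₗ[k] k)
    (hBsym : ∀ x y : 𝔤, B x y = B y x)
    (hBinv : ∀ x y z : 𝔤, B ⁅x, y⁆ z + B y ⁅x, z⁆ = 0)
    (hBnd : ∀ x : 𝔤, (∀ y : 𝔤, B x y = 0) → x = 0)
    -- B♯ : 𝔤* → 𝔤, the inverse of the musical isomorphism of B
    (Bs : Module.Dual k 𝔤 →ₗ[k] 𝔤)
    (hBs : ∀ (α : Module.Dual k 𝔤) (y : 𝔤), B (Bs α) y = α y)
    -- the bracket of the semidirect product 𝔊 = 𝔤* ⋊ 𝔤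
    (brk : Module.Dual k 𝔤 × 𝔤 → Module.Dual k 𝔤 × 𝔤 → Module.Dual k 𝔤 × 𝔤)
    (hbrk1 : ∀ (u v : Module.Dual k 𝔤 × 𝔤) (y : 𝔤),
      (brk u v).1 y = -v.1 ⁅Bs u.1, y⁆ - v.1 ⁅u.2, y⁆ + u.1 ⁅v.2, y⁆)
    (hbrk2 : ∀ u v : Module.Dual k 𝔤 × 𝔤, (brk u v).2 = ⁅u.2, v.2⁆)
    -- the bilinear form B̄ on 𝔊
    (Bb : Module.Dual k 𝔤 × 𝔤 → Module.Dual k 𝔤 × 𝔤 → k)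
    (hBb : ∀ u v : Module.Dual k 𝔤 × 𝔤, Bb u v = v.1 u.2 + u.1 v.2 + u.1 (Bs v.1)) :
    -- B̄ is symmetric
    (∀ u v, Bb u v = Bb v u) ∧
    -- B̄ is nondegenerate
    (∀ u, (∀ v, Bb u v = 0) → u = 0) ∧
    -- B̄ is ad-invariant for the semidirect product bracket
    (∀ u v w, Bb (brk u v) w + Bb v (brk u w) = 0) := by
  have h1 : ∀ (α β : Module.Dual k 𝔤), α (Bs β) = β (Bs α) := by
    intro α β
    rw [← hBs α (Bs β), ← hBs β (Bs α), hBsym]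
  have L1 : ∀ x y z : 𝔤, B x ⁅y, z⁆ = - B x ⁅z, y⁆ := by
    intro x y z
    rw [← lie_skew z y, map_neg]; simp
  have L2 : ∀ x y z : 𝔤, B x ⁅y, z⁆ = B z ⁅x, y⁆ := by
    intro x y z
    have h := hBinv y x z
    have h0 : (⁅y, x⁆ : 𝔤) = -⁅x, y⁆ := (lie_skew y x).symm
    have h2 : B ⁅y, x⁆ z = - B ⁅x, y⁆ z := by
      rw [h0, map_neg, LinearMap.neg_apply]
    have h3 := hBsym ⁅x, y⁆ z
    linear_combination h - h2 + h3
  refine ⟨?_, ?_, ?_⟩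
  · intro u v
    rw [hBb, hBb, h1]
    ring
  · intro u hu
    have h2 : u.1 = 0 := by
      ext y
      have := hu (0, y)
      simpa [hBb] using this
    have h3 : u.2 = 0 := by
      apply hBnd
      intro y
      have := hu (B y, 0)
      rw [hBb] at this
      simp [h2] at this
      rw [hBsym]
      exact this
    exact Prod.ext h2 h3
  · intro u v w
    obtain ⟨α, X⟩ := u
    obtain ⟨β, Y⟩ := v
    obtain ⟨γ, Z⟩ := w
    rw [hBb, hBb, hbrk2, hbrk2, h1 β, hbrk1, hbrk1, hbrk1, hbrk1]
    simp only
    rw [← hBs γ ⁅X, Y⁆, ← hBs β ⁅Bs α, Z⁆, ← hBs β ⁅X, Z⁆, ← hBs α ⁅Y, Z⁆,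
      ← hBs β ⁅Bs α, Bs γ⁆, ← hBs β ⁅X, Bs γ⁆, ← hBs α ⁅Y, Bs γ⁆,
      ← hBs γ ⁅Bs α, Y⁆, ← hBs α ⁅Z, Y⁆,
      ← hBs γ ⁅Bs α, Bs β⁆, ← hBs γ ⁅X, Bs β⁆, ← hBs α ⁅Z, Bs β⁆]
    set a := Bs α
    set b := Bs β
    set c := Bs γ
    linear_combination (L1 a Y Z) + (L2 a Z b) - (L2 c a b) - (L1 b c a) + (L2 a Y c) - (L2 c X b) - (L1 b c X)
end

section
/- Let 𝔤 be a quadratic Lie algebra with invariant nondegenerate symmetric bilinear form B, and 𝔠 ⊆ 𝔤 a coisotropic Lie subalgebra (i.e. 𝔠^⊥ ⊆ 𝔠, where 𝔠^⊥ is the B-orthogonal of 𝔠). Then 𝔠̃ = {(u,v) ∈ 𝔠 × 𝔠 : u − v ∈ 𝔠^⊥} is a Lagrangian Lie subalgebra of the double 𝔡 = 𝔤 ⊕ 𝔤 equipped with the form B ⊖ B. -/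
/-! Isotropy: for (u, v), (a, b) ∈ 𝔠̃ one has B u a − B v b = B (u − v) a + B v (a − b) = 0.
Maximality: a vector orthogonal to 𝔠̃ is orthogonal to the diagonal pairs (c, c), so the
difference of its components lies in 𝔠^⊥; it is also orthogonal to every (a, 0) with a ∈ 𝔠^⊥
(these lie in 𝔠̃ because 𝔠^⊥ ⊆ 𝔠), so its first component lies in 𝔠^⊥⊥ = 𝔠.
Bracket: invariance of B makes 𝔠^⊥ an ideal of 𝔠, and
⁅u₁, v₁⁆ − ⁅u₂, v₂⁆ = ⁅u₁ − u₂, v₁⁆ + ⁅u₂, v₁ − v₂⁆. -/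

/-- The subspace 𝔠̃ = {(u,v) ∈ 𝔠 × 𝔠 : u − v ∈ 𝔠^⊥} associated to a coisotropic
subalgebra 𝔠 of a quadratic Lie algebra (𝔤, B). -/
def ctilde {k 𝔤 : Type*} [Field k] [LieRing 𝔤] [LieAlgebra k 𝔤]
    (B : 𝔤 →ₗ[k] 𝔤 →ₗ[k] k) (𝔠 : LieSubalgebra k 𝔤) : Set (𝔤 × 𝔤) :=
  {p | p.1 ∈ 𝔠 ∧ p.2 ∈ 𝔠 ∧ ∀ c ∈ 𝔠, B (p.1 - p.2) c = 0}

def perp {R M : Type*} [CommRing R] [AddCommGroup M] [Module R M]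
    (B : M →ₗ[R] M →ₗ[R] R) (s : Set M) : Set M :=
  {x | ∀ c ∈ s, B x c = 0}

theorem add_mem_perp {R M : Type*} [CommRing R] [AddCommGroup M] [Module R M]
    {B : M →ₗ[R] M →ₗ[R] R} {s : Set M} {a b : M} (ha : a ∈ perp B s) (hb : b ∈ perp B s) :
    a + b ∈ perp B s :=
  fun c hc => by rw [map_add, LinearMap.add_apply, ha c hc, hb c hc, add_zero]

theorem mem_of_mem_perp_perp {K V : Type*} [Field K] [AddCommGroup V] [Module K V]
    [FiniteDimensional K V] {B : V →ₗ[K] V →ₗ[K] K} (hBsym : ∀ x y : V, B x y = B y x)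
    (hBnd : ∀ x : V, (∀ y : V, B x y = 0) → x = 0) (W : Submodule K V) {x : V}
    (hx : x ∈ perp B (perp B W)) : x ∈ W := by
  have hrefl : LinearMap.BilinForm.IsRefl B := fun x y h => by rwa [hBsym]
  have hnd : B.Nondegenerate := hrefl.nondegenerate_iff_separatingLeft.mpr hBnd
  rw [← LinearMap.BilinForm.orthogonal_orthogonal hnd hrefl W]
  intro n hn
  rw [hBsym]
  exact hx n fun c hc => by rw [hBsym]; exact hn c hc

section Invariant

variable {R 𝔤 : Type*} [CommRing R] [LieRing 𝔤] [LieAlgebra R 𝔤]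
  {B : 𝔤 →ₗ[R] 𝔤 →ₗ[R] R} {𝔠 : LieSubalgebra R 𝔤}

theorem lie_mem_perp_right (hBinv : ∀ x y z : 𝔤, B ⁅x, y⁆ z + B y ⁅x, z⁆ = 0) {c a : 𝔤}
    (hc : c ∈ 𝔠) (ha : a ∈ perp B 𝔠) : ⁅c, a⁆ ∈ perp B 𝔠 := by
  intro d hd
  linear_combination hBinv c a d - ha _ (𝔠.lie_mem hc hd)

theorem lie_mem_perp_left (hBinv : ∀ x y z : 𝔤, B ⁅x, y⁆ z + B y ⁅x, z⁆ = 0) {a c : 𝔤}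
    (ha : a ∈ perp B 𝔠) (hc : c ∈ 𝔠) : ⁅a, c⁆ ∈ perp B 𝔠 := by
  rw [← lie_skew]
  intro d hd
  rw [map_neg, LinearMap.neg_apply, lie_mem_perp_right hBinv hc ha d hd, neg_zero]

end Invariant

section Ctilde

variable {k 𝔤 : Type*} [Field k] [LieRing 𝔤] [LieAlgebra k 𝔤]
  {B : 𝔤 →ₗ[k] 𝔤 →ₗ[k] k} {𝔠 : LieSubalgebra k 𝔤}

theorem lie_mem_ctilde (hBinv : ∀ x y z : 𝔤, B ⁅x, y⁆ z + B y ⁅x, z⁆ = 0)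
    {p q : 𝔤 × 𝔤} (hp : p ∈ ctilde B 𝔠) (hq : q ∈ ctilde B 𝔠) :
    ((⁅p.1, q.1⁆, ⁅p.2, q.2⁆) : 𝔤 × 𝔤) ∈ ctilde B 𝔠 := by
  obtain ⟨hp₁, hp₂, hp⟩ := hp
  obtain ⟨hq₁, hq₂, hq⟩ := hq
  refine ⟨𝔠.lie_mem hp₁ hq₁, 𝔠.lie_mem hp₂ hq₂, ?_⟩
  have hsplit : ⁅p.1, q.1⁆ - ⁅p.2, q.2⁆ = ⁅p.1 - p.2, q.1⁆ + ⁅p.2, q.1 - q.2⁆ := by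
    simp only [sub_lie, lie_sub]; abel
  rw [hsplit]
  exact add_mem_perp (lie_mem_perp_left hBinv hp hq₁) (lie_mem_perp_right hBinv hp₂ hq)

theorem ctilde_isotropic (hBsym : ∀ x y : 𝔤, B x y = B y x) {p q : 𝔤 × 𝔤}
    (hp : p ∈ ctilde B 𝔠) (hq : q ∈ ctilde B 𝔠) : B p.1 q.1 - B p.2 q.2 = 0 := by
  have h₁ : B (p.1 - p.2) q.1 = 0 := hp.2.2 q.1 hq.1
  have h₂ : B p.2 (q.1 - q.2) = 0 := by rw [hBsym]; exact hq.2.2 p.2 hp.2.1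
  simp only [map_sub, LinearMap.sub_apply] at h₁ h₂
  linear_combination h₁ + h₂

theorem sub_mem_perp_of_perp_ctilde {v : 𝔤 × 𝔤}
    (hv : ∀ l ∈ ctilde B 𝔠, B v.1 l.1 - B v.2 l.2 = 0) : v.1 - v.2 ∈ perp B 𝔠 := by
  intro c hc
  have hdiag : ((c, c) : 𝔤 × 𝔤) ∈ ctilde B 𝔠 := ⟨hc, hc, by simp⟩
  simpa using hv _ hdiag

theorem fst_mem_perp_perp_of_perp_ctilde (hco : perp B 𝔠 ⊆ 𝔠) {v : 𝔤 × 𝔤}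
    (hv : ∀ l ∈ ctilde B 𝔠, B v.1 l.1 - B v.2 l.2 = 0) : v.1 ∈ perp B (perp B 𝔠) := by
  intro a ha
  have ha0 : ((a, 0) : 𝔤 × 𝔤) ∈ ctilde B 𝔠 :=
    ⟨hco ha, 𝔠.zero_mem, fun c hc => by simpa using ha c hc⟩
  simpa using hv _ ha0

theorem ctilde_eq_orthogonal [FiniteDimensional k 𝔤] (hBsym : ∀ x y : 𝔤, B x y = B y x)
    (hBnd : ∀ x : 𝔤, (∀ y : 𝔤, B x y = 0) → x = 0) (hco : perp B 𝔠 ⊆ 𝔠) :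
    ctilde B 𝔠 = {v : 𝔤 × 𝔤 | ∀ l ∈ ctilde B 𝔠, B v.1 l.1 - B v.2 l.2 = 0} := by
  refine Set.Subset.antisymm (fun p hp q hq => ctilde_isotropic hBsym hp hq) fun v hv => ?_
  have hsub := sub_mem_perp_of_perp_ctilde hv
  have hfst : v.1 ∈ 𝔠 :=
    mem_of_mem_perp_perp hBsym hBnd 𝔠.toSubmodule (fst_mem_perp_perp_of_perp_ctilde hco hv)
  refine ⟨hfst, ?_, hsub⟩
  simpa using 𝔠.sub_mem hfst (hco hsub)

end Ctilde

/-- Let 𝔤 be a finite-dimensional quadratic Lie algebra with invariant nondegenerate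
symmetric form B and 𝔠 ⊆ 𝔤 a coisotropic Lie subalgebra (𝔠^⊥ ⊆ 𝔠). Then
𝔠̃ = {(u,v) ∈ 𝔠 × 𝔠 : u − v ∈ 𝔠^⊥} is a Lagrangian Lie subalgebra of the double
𝔡 = 𝔤 ⊕ 𝔤 with the form B ⊖ B: it is closed under the componentwise bracket and
equals its own (B ⊖ B)-orthogonal. -/
theorem stmt_10 {k 𝔤 : Type*} [Field k] [LieRing 𝔤] [LieAlgebra k 𝔤]
    [FiniteDimensional k 𝔤]
    (B : 𝔤 →ₗ[k] 𝔤 →ₗ[k] k)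
    (hBsym : ∀ x y : 𝔤, B x y = B y x)
    (hBinv : ∀ x y z : 𝔤, B ⁅x, y⁆ z + B y ⁅x, z⁆ = 0)
    (hBnd : ∀ x : 𝔤, (∀ y : 𝔤, B x y = 0) → x = 0)
    (𝔠 : LieSubalgebra k 𝔤)
    -- 𝔠 is coisotropic: 𝔠^⊥ ⊆ 𝔠
    (hco : ∀ x : 𝔤, (∀ c ∈ 𝔠, B x c = 0) → x ∈ 𝔠) :
    -- 𝔠̃ is a Lie subalgebra of 𝔤 ⊕ 𝔤
    (∀ p q : 𝔤 × 𝔤, p ∈ ctilde B 𝔠 → q ∈ ctilde B 𝔠 →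
      ((⁅p.1, q.1⁆, ⁅p.2, q.2⁆) : 𝔤 × 𝔤) ∈ ctilde B 𝔠) ∧
    -- 𝔠̃ is Lagrangian with respect to B ⊖ B
    (ctilde B 𝔠 = {v : 𝔤 × 𝔤 | ∀ l ∈ ctilde B 𝔠, B v.1 l.1 - B v.2 l.2 = 0}) :=
  ⟨fun _ _ hp hq => lie_mem_ctilde hBinv hp hq, ctilde_eq_orthogonal hBsym hBnd hco⟩
end
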